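/- Suppose additionally y ∈ A and λ ∈ F satisfy hy − yh = λy. Then for every a ∈ F and every s ∈ ℕ, (y^s ⊗ 1) · F_a = F_{a−sλ} · (y^s ⊗ 1) in (A ⊗_F A)[[t]]. (This is identity (3.9) of the paper's Lemma 3.3, proved there for y = D_K(x^α) ∈ U(𝐊) with λ = α_k − α_{−k}; only the stated commutation relations are used.) -/

import Mathlib

open scoped TensorProduct

/-- Rising factorial `x_a^{⟨m⟩} := (x+a)(x+a+1)⋯(x+a+m-1)` in an `F`-algebra `A`. -/
def risePow {F A : Type*} [Field F] [Ring A] [Algebra F A] (x : A) (a : F) : ℕ → A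
  | 0 => 1
  | m + 1 => risePow x a m * (x + algebraMap F A (a + (m : F)))

/-- `F_a = Σ_{r≥0} (1/r!) (h_a^{⟨r⟩} ⊗ e^r) t^r ∈ (A ⊗ A)[[t]]`. -/
noncomputable def capF {F A : Type*} [Field F] [Ring A] [Algebra F A] (h e : A) (a : F) :
    PowerSeries (A ⊗[F] A) :=
  PowerSeries.mk fun r => ((r.factorial : F))⁻¹ • (risePow h a r ⊗ₜ[F] e ^ r)

/-!
The relation `hy − yh = λy` says `y (h + c) = (h + c − λ) y`, so moving `y ^ s` past each factor
`h + a + m` of the rising factorial `h_a^{⟨r⟩}` shifts `a` to `a − sλ`. Hence `y ^ s ⊗ 1`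
semiconjugates every coefficient of `F_a` into the corresponding coefficient of `F_{a−sλ}`.
-/

section ShiftCommutation

variable {R A : Type*} [CommRing R] [Ring A] [Algebra R A] {h y : A} {lam : R}

theorem semiconjBy_add_algebraMap_of_commutator (hy : h * y - y * h = lam • y) (c : R) :
    SemiconjBy y (h + algebraMap R A c) (h + algebraMap R A (c - lam)) := by
  have hyh : y * h = h * y - lam • y := by rw [← hy]; abel
  rw [SemiconjBy, mul_add, add_mul, hyh, map_sub, sub_mul, Algebra.smul_def,
    Algebra.commutes c y]
  abel

theorem semiconjBy_pow_add_algebraMap_of_commutator (hy : h * y - y * h = lam • y)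
    (c : R) (s : ℕ) :
    SemiconjBy (y ^ s) (h + algebraMap R A c) (h + algebraMap R A (c - s * lam)) := by
  induction s generalizing c with
  | zero => simp
  | succ n ih =>
    rw [pow_succ, show c - ((n + 1 : ℕ) : R) * lam = c - lam - n * lam by push_cast; ring]
    exact (ih (c - lam)).mul_left (semiconjBy_add_algebraMap_of_commutator hy c)

end ShiftCommutation

theorem semiconjBy_pow_risePow_of_commutator {F A : Type*} [Field F] [Ring A] [Algebra F A]
    {h y : A} {lam : F} (hy : h * y - y * h = lam • y) (a : F) (s r : ℕ) :
    SemiconjBy (y ^ s) (risePow h a r) (risePow h (a - s * lam) r) := by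
  induction r with
  | zero => exact SemiconjBy.one_right _
  | succ m ih =>
    rw [risePow, risePow, show a - s * lam + m = a + m - s * lam by ring]
    exact ih.mul_right (semiconjBy_pow_add_algebraMap_of_commutator hy (a + m) s)

theorem tmul_pow_mul_capF_general {F A : Type*} [Field F] [Ring A] [Algebra F A]
    (h e : A)
    (y : A) (lam : F) (hy : h * y - y * h = lam • y) (a : F) (s : ℕ) :
    PowerSeries.C (R := A ⊗[F] A) ((y ^ s) ⊗ₜ[F] (1 : A)) * capF h e a =
      capF h e (a - (s : F) * lam) * PowerSeries.C (R := A ⊗[F] A) ((y ^ s) ⊗ₜ[F] (1 : A)) := by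
  ext r
  rw [PowerSeries.coeff_C_mul, PowerSeries.coeff_mul_C]
  simp only [capF, PowerSeries.coeff_mk, mul_smul_comm, smul_mul_assoc]
  congr 1
  -- `⊗ₜ` binds tighter than `^`, so the coefficient here is `(risePow h a r ⊗ₜ e) ^ r`.
  exact (((semiconjBy_pow_risePow_of_commutator hy a s r).tmul (R := F)
    (SemiconjBy.one_left e)).pow_right r).eq

/-- If `he − eh = e` and `hy − yh = λ·y`, then
`(y^s ⊗ 1) · F_a = F_{a−sλ} · (y^s ⊗ 1)` in `(A ⊗ A)[[t]]`. -/
theorem tmul_pow_mul_capF {F A : Type*} [Field F] [CharZero F] [Ring A] [Algebra F A]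
    (h e : A) (he : h * e - e * h = e)
    (y : A) (lam : F) (hy : h * y - y * h = lam • y) (a : F) (s : ℕ) :
    PowerSeries.C (R := A ⊗[F] A) ((y ^ s) ⊗ₜ[F] (1 : A)) * capF h e a =
      capF h e (a - (s : F) * lam) * PowerSeries.C (R := A ⊗[F] A) ((y ^ s) ⊗ₜ[F] (1 : A)) :=
  tmul_pow_mul_capF_general h e y lam hy a s
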